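/- arXiv:1511.03510 — 2 statements merged into one kernel-verified Lean document; each statement's English description precedes it below -/
import Mathlib

section
/- Let a, b be nonnegative real numbers and c, d be positive real numbers. Then (a − b)² − (d − c)(b²/d − a²/c) ≥ 0. More precisely, (a − b)² − (d − c)(b²/d − a²/c) = (a·√(d/c) − b·√(c/d))², and equality to 0 holds if and only if a·d = b·c. -/
/-- Pointwise Picone-type inequality: for `a, b ≥ 0` and `c, d > 0`,
`(a − b)² − (d − c)(b²/d − a²/c) = (a·√(d/c) − b·√(c/d))² ≥ 0`,
with equality to `0` iff `a·d = b·c`. -/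
theorem picone_pointwise (a b c d : ℝ) (ha : 0 ≤ a) (hb : 0 ≤ b) (hc : 0 < c) (hd : 0 < d) :
    (a - b) ^ 2 - (d - c) * (b ^ 2 / d - a ^ 2 / c)
      = (a * Real.sqrt (d / c) - b * Real.sqrt (c / d)) ^ 2 ∧
    0 ≤ (a - b) ^ 2 - (d - c) * (b ^ 2 / d - a ^ 2 / c) ∧
    ((a - b) ^ 2 - (d - c) * (b ^ 2 / d - a ^ 2 / c) = 0 ↔ a * d = b * c) := by
  set s := Real.sqrt (d / c) with hsdef
  set t := Real.sqrt (c / d) with htdef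
  have hs : s ^ 2 = d / c := Real.sq_sqrt (by positivity)
  have ht : t ^ 2 = c / d := Real.sq_sqrt (by positivity)
  have hsnn : 0 ≤ s := Real.sqrt_nonneg _
  have htnn : 0 ≤ t := Real.sqrt_nonneg _
  have hst : s * t = 1 := by
    rw [hsdef, htdef, ← Real.sqrt_mul (by positivity), div_mul_div_comm, mul_comm,
      div_self (by positivity), Real.sqrt_one]
  have key : (a - b) ^ 2 - (d - c) * (b ^ 2 / d - a ^ 2 / c) = (a * s - b * t) ^ 2 := by
    have h1 : (a * s - b * t) ^ 2
        = a ^ 2 * (d / c) + b ^ 2 * (c / d) - 2 * a * b := by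
      have : (a * s - b * t) ^ 2
          = a ^ 2 * s ^ 2 + b ^ 2 * t ^ 2 - 2 * a * b * (s * t) := by ring
      rw [this, hs, ht, hst]; ring
    rw [h1]; field_simp; ring
  refine ⟨key, by rw [key]; positivity, ?_⟩
  rw [key]
  constructor
  · intro h
    have h2 : a * s = b * t := by
      have := pow_eq_zero_iff (n := 2) (by norm_num) |>.mp h
      linarith
    have h3 : a ^ 2 * (d / c) = b ^ 2 * (c / d) := by
      have : (a * s) ^ 2 = (b * t) ^ 2 := by rw [h2]
      rw [mul_pow, mul_pow, hs, ht] at this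
      exact this
    have h4 : (a * d) ^ 2 = (b * c) ^ 2 := by
      field_simp at h3
      nlinarith [h3]
    exact (sq_eq_sq₀ (by positivity) (by positivity)).mp h4
  · intro h
    have h2 : a * s = b * t := by
      have hsq : (a * s) ^ 2 = (b * t) ^ 2 := by
        rw [mul_pow, mul_pow, hs, ht, ← mul_div_assoc, ← mul_div_assoc,
          div_eq_div_iff hc.ne' hd.ne']
        linear_combination (a * d + b * c) * h
      exact (sq_eq_sq₀ (by positivity) (by positivity)).mp hsq
    rw [h2, sub_self]
    norm_num
end

section
/- Let u : ℝ^N → ℝ be nonnegative and v : ℝ^N → ℝ be positive, and define L(u,v)(x,y) = (u(x) − u(y))² − (v(y) − v(x))(u(y)²/v(y) − u(x)²/v(x)). If L(u,v)(x,y) = 0 for all x, y ∈ ℝ^N, then there exists a constant k ≥ 0 such that u(x) = k·v(x) for all x ∈ ℝ^N. Conversely, if u = k·v for some constant k ≥ 0, then L(u,v)(x,y) = 0 for all x, y. -/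
/-- Picone-type identity: for `u ≥ 0` and `v > 0` on `ℝ^N`, with
`L(u,v)(x,y) = (u(x) − u(y))² − (v(y) − v(x))(u(y)²/v(y) − u(x)²/v(x))`,
one has `L(u,v) ≡ 0` iff `u = k·v` for some constant `k ≥ 0`. -/
theorem picone_equality_case (N : ℕ) (hN : 2 ≤ N)
    (u v : EuclideanSpace ℝ (Fin N) → ℝ)
    (hu : ∀ x, 0 ≤ u x) (hv : ∀ x, 0 < v x) :
    (∀ x y : EuclideanSpace ℝ (Fin N),
        (u x - u y) ^ 2 - (v y - v x) * ((u y) ^ 2 / v y - (u x) ^ 2 / v x) = 0)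
      ↔ ∃ k : ℝ, 0 ≤ k ∧ ∀ x, u x = k * v x := by
  constructor
  · intro h
    refine ⟨u 0 / v 0, div_nonneg (hu 0) (hv 0).le, fun x => ?_⟩
    have hx := h x 0
    have hvx := hv x
    have hv0 := hv 0
    have key : (v x * u 0 - v 0 * u x) ^ 2 = 0 := by
      field_simp at hx
      nlinarith [hx]
    have h0 : v x * u 0 - v 0 * u x = 0 := by
      have := pow_eq_zero_iff (n := 2) (by norm_num) |>.mp key
      exact this
    field_simp
    linarith [h0]
  · rintro ⟨k, hk, hku⟩ x y
    simp only [hku]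
    have hx := (hv x).ne'
    have hy := (hv y).ne'
    field_simp
    ring
end
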